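/- arXiv:1911.09441 — 10 statements merged into one kernel-verified Lean document; each statement's English description precedes it below -/
import Mathlib

section
/- Let a < 0, T > 0, k₋ = √(-a/2), and A_T < k₋. Define A(t) = -k₋ · ((A_T - k₋)·exp(4k₋(T - t)) + (A_T + k₋)) / ((A_T - k₋)·exp(4k₋(T - t)) - (A_T + k₋)). Then the denominator (A_T - k₋)·exp(4k₋(T - t)) - (A_T + k₋) is nonzero for every t ≤ T, A satisfies A'(t) = -a - 2·A(t)² for every t ≤ T, and A(T) = A_T. In particular the terminal value problem for the Riccati equation has a solution on [0, T] for every T > 0. -/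
/-!
With `k² = -a/2` the equation reads `A' = 2(k² - A²)`, whose constant solutions are `±k`.
The Möbius substitution `A = -k (u + d)/(u - d)` linearises it to `u' = -4k u`, so
`u = c e^{4k(T-t)}`, and the terminal condition is met by `c = A_T - k`, `d = A_T + k`.
For `A_T < k` and `t ≤ T` the denominator is at most `-2k < 0`.
-/

open Real

noncomputable section

namespace Riccati

def explicitSol (k c d T t : ℝ) : ℝ :=
  -k * (c * exp (4 * k * (T - t)) + d) / (c * exp (4 * k * (T - t)) - d)

theorem hasDerivAt_explicitSol {k c d T t : ℝ} (hden : c * exp (4 * k * (T - t)) - d ≠ 0) :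
    HasDerivAt (explicitSol k c d T) (2 * k ^ 2 - 2 * explicitSol k c d T t ^ 2) t := by
  have hlin : HasDerivAt (fun s : ℝ => 4 * k * (T - s)) (-(4 * k)) t := by
    simpa using ((hasDerivAt_const t T).sub (hasDerivAt_id t)).const_mul (4 * k)
  have hE := ((hasDerivAt_exp _).comp t hlin).const_mul c
  have hquot : HasDerivAt (explicitSol k c d T) _ t :=
    ((hE.add_const d).const_mul (-k)).div (hE.sub_const d) hden
  refine hquot.congr_deriv ?_
  rw [explicitSol, div_pow, Function.comp_apply]
  generalize exp (4 * k * (T - t)) = E at hden ⊢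
  field_simp
  ring

theorem denom_neg {k A_T T t : ℝ} (hk : 0 < k) (hAT : A_T < k) (ht : t ≤ T) :
    (A_T - k) * exp (4 * k * (T - t)) - (A_T + k) < 0 := by
  have hE : 1 ≤ exp (4 * k * (T - t)) := one_le_exp (by nlinarith)
  nlinarith

theorem explicitSol_terminal {k A_T T : ℝ} (hk : k ≠ 0) :
    explicitSol k (A_T - k) (A_T + k) T T = A_T := by
  have hden : A_T - k - (A_T + k) ≠ 0 := by
    rw [show A_T - k - (A_T + k) = -(2 * k) by ring]
    simpa using hk
  simp only [explicitSol, sub_self, mul_zero, exp_zero, mul_one]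
  field_simp
  ring

end Riccati

end

open Riccati in
theorem riccati_explicit_solution_a_neg_general
    (a T A_T k : ℝ) (ha : a < 0)
    (hk : k = Real.sqrt (-a / 2)) (hAT : A_T < k)
    (A : ℝ → ℝ)
    (hA : ∀ t : ℝ, A t =
      -k * ((A_T - k) * Real.exp (4 * k * (T - t)) + (A_T + k)) /
        ((A_T - k) * Real.exp (4 * k * (T - t)) - (A_T + k))) :
    (∀ t ≤ T, (A_T - k) * Real.exp (4 * k * (T - t)) - (A_T + k) ≠ 0) ∧
    (∀ t ≤ T, HasDerivAt A (-a - 2 * (A t) ^ 2) t) ∧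
    A T = A_T := by
  have hk0 : 0 < k := hk ▸ sqrt_pos.2 (by linarith)
  have ha_eq : -a = 2 * k ^ 2 := by
    rw [hk, sq_sqrt (by linarith)]
    ring
  have hA_eq : A = explicitSol k (A_T - k) (A_T + k) T := funext hA
  have hden : ∀ t ≤ T, (A_T - k) * exp (4 * k * (T - t)) - (A_T + k) ≠ 0 :=
    fun t ht => (denom_neg hk0 hAT ht).ne
  refine ⟨hden, fun t ht => ?_, ?_⟩
  · rw [ha_eq, hA_eq]
    exact hasDerivAt_explicitSol (hden t ht)
  · rw [hA_eq, explicitSol_terminal hk0.ne']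

/-- For `a < 0`, `T > 0`, `k₋ = √(-a/2)` and terminal data `A_T < k₋`, the explicit formula
`A(t) = -k₋ ((A_T - k₋) e^{4k₋(T-t)} + (A_T + k₋)) / ((A_T - k₋) e^{4k₋(T-t)} - (A_T + k₋))`
has nonvanishing denominator for all `t ≤ T`, solves the Riccati equation
`A' = -a - 2A²` for all `t ≤ T`, and satisfies the terminal condition `A(T) = A_T`.
In particular the terminal value problem is solvable on `[0, T]` for every `T > 0`. -/
theorem riccati_explicit_solution_a_neg
    (a T A_T k : ℝ) (ha : a < 0) (hT : 0 < T)
    (hk : k = Real.sqrt (-a / 2)) (hAT : A_T < k)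
    (A : ℝ → ℝ)
    (hA : ∀ t : ℝ, A t =
      -k * ((A_T - k) * Real.exp (4 * k * (T - t)) + (A_T + k)) /
        ((A_T - k) * Real.exp (4 * k * (T - t)) - (A_T + k))) :
    (∀ t ≤ T, (A_T - k) * Real.exp (4 * k * (T - t)) - (A_T + k) ≠ 0) ∧
    (∀ t ≤ T, HasDerivAt A (-a - 2 * (A t) ^ 2) t) ∧
    A T = A_T :=
  riccati_explicit_solution_a_neg_general a T A_T k ha hk hAT A hA
end

section
/- Let a > 0, k₊ = √(a/2), and A_T ∈ ℝ. If T ≥ (1/√(2a)) · (π/2 - arctan(A_T/k₊)), then there exists no differentiable function A : [0, T] → ℝ satisfying A'(t) = -a - 2·A(t)² for all t ∈ [0, T] together with A(T) = A_T. That is, for a > 0 the terminal value problem for the Riccati equation is solvable on [0, T] only for T < (1/√(2a)) · (π/2 - arctan(A_T/k₊)). -/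
/-!
With `a = 2k²` and `k > 0`, the substitution `A = k tan θ` linearises the Riccati equation to
`θ' = -2k`, so `arctan (A t / k) + 2kt` is constant along any solution. At the terminal time
this invariant equals `arctan (A_T / k) + 2kT ≥ π/2` by the hypothesis on `T`, while at `t = 0`
it is `arctan (A 0 / k) < π/2`.
-/

open Real Set

theorem hasDerivAt_arctan_div_add_mul_eq_zero {A : ℝ → ℝ} {k t : ℝ} (hk : k ≠ 0)
    (hA : HasDerivAt A (-(2 * k ^ 2) - 2 * A t ^ 2) t) :
    HasDerivAt (fun s => arctan (A s / k) + 2 * k * s) 0 t := by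
  have h := ((hA.div_const k).arctan).add ((hasDerivAt_id t).const_mul (2 * k))
  refine h.congr_deriv ?_
  have hden : k ^ 2 + A t ^ 2 ≠ 0 := by positivity
  field_simp
  ring

theorem arctan_div_add_mul_eq_of_riccati {A : ℝ → ℝ} {k T : ℝ} (hk : k ≠ 0) (hT : 0 ≤ T)
    (hA : ∀ t ∈ Icc 0 T, HasDerivAt A (-(2 * k ^ 2) - 2 * A t ^ 2) t) :
    arctan (A T / k) + 2 * k * T = arctan (A 0 / k) := by
  have hg t (ht : t ∈ Icc 0 T) := hasDerivAt_arctan_div_add_mul_eq_zero hk (hA t ht)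
  have hconst := constant_of_has_deriv_right_zero
    (fun t ht => (hg t ht).continuousAt.continuousWithinAt)
    (fun t ht => (hg t (Ico_subset_Icc_self ht)).hasDerivWithinAt) T ⟨hT, le_rfl⟩
  simpa using hconst

/-- For `a > 0`, `k₊ = √(a/2)` and any terminal data `A_T`, if
`T ≥ (1/√(2a)) (π/2 - arctan(A_T/k₊))` then there is no differentiable function
`A : [0,T] → ℝ` solving the Riccati equation `A' = -a - 2A²` on `[0, T]` with
`A(T) = A_T`: the terminal value problem is solvable on `[0,T]` only for
`T < (1/√(2a)) (π/2 - arctan(A_T/k₊))`. -/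
theorem riccati_nonexistence_a_pos
    (a T A_T k : ℝ) (ha : 0 < a) (hk : k = Real.sqrt (a / 2))
    (hT : T ≥ (1 / Real.sqrt (2 * a)) * (π / 2 - Real.arctan (A_T / k))) :
    ¬ ∃ A : ℝ → ℝ,
        (∀ t ∈ Set.Icc (0 : ℝ) T, HasDerivAt A (-a - 2 * (A t) ^ 2) t) ∧
        A T = A_T := by
  rintro ⟨A, hA, rfl⟩
  have hk0 : 0 < k := hk ▸ sqrt_pos.mpr (half_pos ha)
  have ha_eq : a = 2 * k ^ 2 := by rw [hk, sq_sqrt (half_pos ha).le]; ring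
  have hsqrt : √(2 * a) = 2 * k := by
    rw [ha_eq, show 2 * (2 * k ^ 2) = (2 * k) ^ 2 by ring, sqrt_sq (by positivity)]
  have hterminal : π / 2 ≤ arctan (A T / k) + 2 * k * T := by
    rw [hsqrt, ge_iff_le, one_div_mul_eq_div, div_le_iff₀ (by positivity)] at hT
    linarith
  have hinitial := arctan_lt_pi_div_two (A 0 / k)
  have hT0 : 0 ≤ T := by nlinarith [arctan_lt_pi_div_two (A T / k)]
  rw [ha_eq] at hA
  linarith [arctan_div_add_mul_eq_of_riccati hk0.ne' hT0 hA]
end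

section
/- Let a < 0, k₋ = √(-a/2), and A_T > k₋. If T ≥ (1/(4k₋)) · ln((A_T + k₋)/(A_T - k₋)), then there exists no differentiable function A : [0, T] → ℝ satisfying A'(t) = -a - 2·A(t)² for all t ∈ [0, T] together with A(T) = A_T. Hence for a < 0 and terminal data A_T > k₋ the solution does not exist for all T. -/
/-!
With `k² = -a/2` the equation reads `A' = 2 (k² - A²)`, and `(A - k)/(A + k) · e^{4kt}` is a first
integral on any interval where `A + k ≠ 0`. Since `k` is an equilibrium, a solution above `k` at `T`
stays above `k` on `[0, T]`, so the first integral applies there. At `t = 0` it gives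
`e^{4kT} < (A_T + k)/(A_T - k)` (the ratio `(A - k)/(A + k)` is below `1`), i.e. `T` is strictly
smaller than the blow-up time `(1/(4k)) ln((A_T + k)/(A_T - k))`.
-/

open Real Set

namespace Riccati

variable {A : ℝ → ℝ} {k s T t : ℝ}

lemma hasDerivAt_sub_mul_exp (hA : HasDerivAt A (2 * (k ^ 2 - A t ^ 2)) t) :
    HasDerivAt (fun u => (A u - k) * exp (4 * k * u)) (-2 * (A t - k) ^ 2 * exp (4 * k * t)) t := by
  have hexp : HasDerivAt (fun u => exp (4 * k * u)) (exp (4 * k * t) * (4 * k)) t :=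
    ((hasDerivAt_id t).const_mul (4 * k)).exp.congr_deriv (by simp)
  exact ((hA.sub_const k).mul hexp).congr_deriv (by ring)

lemma hasDerivAt_div_mul_exp (hA : HasDerivAt A (2 * (k ^ 2 - A t ^ 2)) t) (hAk : A t + k ≠ 0) :
    HasDerivAt (fun u => (A u - k) / (A u + k) * exp (4 * k * u)) 0 t := by
  have hexp : HasDerivAt (fun u => exp (4 * k * u)) (exp (4 * k * t) * (4 * k)) t :=
    ((hasDerivAt_id t).const_mul (4 * k)).exp.congr_deriv (by simp)
  refine (((hA.sub_const k).div (hA.add_const k) hAk).mul hexp).congr_deriv ?_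
  simp only [Pi.div_apply]
  field_simp
  ring

variable (hA : ∀ t ∈ Icc s T, HasDerivAt A (2 * (k ^ 2 - A t ^ 2)) t)
include hA

lemma lt_of_lt_terminal (hAT : k < A T) : ∀ t ∈ Icc s T, k < A t := by
  have hanti : AntitoneOn (fun u => (A u - k) * exp (4 * k * u)) (Icc s T) :=
    antitoneOn_of_hasDerivWithinAt_nonpos (convex_Icc s T)
      (fun u hu => (hasDerivAt_sub_mul_exp (hA u hu)).continuousAt.continuousWithinAt)
      (fun u hu => (hasDerivAt_sub_mul_exp (hA u (interior_subset hu))).hasDerivWithinAt)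
      (fun u _ => by nlinarith [sq_nonneg (A u - k), exp_pos (4 * k * u)])
  intro t ht
  have hTpos : 0 < (A T - k) * exp (4 * k * T) := mul_pos (by linarith) (exp_pos _)
  have := hTpos.trans_le (hanti ht ⟨ht.1.trans ht.2, le_rfl⟩ ht.2)
  nlinarith [exp_pos (4 * k * t)]

lemma div_mul_exp_eq_terminal (hk : 0 < k) (hAT : k < A T) (t : ℝ) (ht : t ∈ Icc s T) :
    (A t - k) / (A t + k) * exp (4 * k * t) = (A T - k) / (A T + k) * exp (4 * k * T) := by
  have hAk : ∀ u ∈ Icc s T, A u + k ≠ 0 := fun u hu => by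
    linarith [lt_of_lt_terminal hA hAT u hu]
  have hconst := constant_of_has_deriv_right_zero
    (fun u hu => (hasDerivAt_div_mul_exp (hA u hu) (hAk u hu)).continuousAt.continuousWithinAt)
    (fun u hu => (hasDerivAt_div_mul_exp (hA u (Ico_subset_Icc_self hu))
      (hAk u (Ico_subset_Icc_self hu))).hasDerivWithinAt)
  rw [hconst t ht, hconst T ⟨ht.1.trans ht.2, le_rfl⟩]

theorem sub_lt_blowUpTime (hk : 0 < k) (hAT : k < A T) :
    T - s < 1 / (4 * k) * log ((A T + k) / (A T - k)) := by
  have hratio : 1 < (A T + k) / (A T - k) := by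
    rw [one_lt_div (by linarith)]
    linarith
  rcases lt_or_ge T s with hTs | hsT
  · have := log_pos hratio
    have : 0 < 1 / (4 * k) * log ((A T + k) / (A T - k)) := by positivity
    linarith
  have hs := div_mul_exp_eq_terminal hA hk hAT s ⟨le_rfl, hsT⟩
  have hAs := lt_of_lt_terminal hA hAT s ⟨le_rfl, hsT⟩
  have hexp : exp (4 * k * (T - s)) < (A T + k) / (A T - k) := by
    have hlt : (A s - k) / (A s + k) < 1 := by
      rw [div_lt_one (by linarith)]
      linarith
    have hTk : 0 < A T - k := by linarith
    rw [mul_sub, exp_sub, div_lt_div_iff₀ (exp_pos _) hTk]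
    have := mul_lt_mul_of_pos_right hlt (exp_pos (4 * k * s))
    rw [hs, div_mul_eq_mul_div, div_lt_iff₀ (by linarith)] at this
    linarith
  rw [← lt_log_iff_exp_lt (by linarith)] at hexp
  rw [one_div_mul_eq_div, lt_div_iff₀ (by positivity)]
  linarith

end Riccati

/-- For `a < 0`, `k₋ = √(-a/2)` and terminal data `A_T > k₋`, if
`T ≥ (1/(4k₋)) ln((A_T + k₋)/(A_T - k₋))` then there is no differentiable function
`A : [0,T] → ℝ` solving the Riccati equation `A' = -a - 2A²` on `[0, T]` with
`A(T) = A_T`. Hence for `a < 0` and `A_T > k₋` the solution does not exist for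
all `T`. -/
theorem riccati_nonexistence_a_neg
    (a T A_T k : ℝ) (ha : a < 0) (hk : k = Real.sqrt (-a / 2)) (hAT : k < A_T)
    (hT : T ≥ (1 / (4 * k)) * Real.log ((A_T + k) / (A_T - k))) :
    ¬ ∃ A : ℝ → ℝ,
        (∀ t ∈ Set.Icc (0 : ℝ) T, HasDerivAt A (-a - 2 * (A t) ^ 2) t) ∧
        A T = A_T := by
  rintro ⟨A, hA, rfl⟩
  have hk0 : 0 < k := hk ▸ Real.sqrt_pos.mpr (by linarith)
  have hk2 : k ^ 2 = -a / 2 := hk ▸ Real.sq_sqrt (by linarith)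
  have hA' : ∀ t ∈ Icc 0 T, HasDerivAt A (2 * (k ^ 2 - A t ^ 2)) t := fun t ht =>
    (hA t ht).congr_deriv (by rw [hk2]; ring)
  have := Riccati.sub_lt_blowUpTime hA' hk0 hAT
  linarith
end

section
/- Let A_T > 0 and T·A_T ≥ 1. Then there exists no differentiable function A : [0, T] → ℝ satisfying A'(t) = -2·A(t)² for all t ∈ [0, T] together with A(T) = A_T. -/
/-!
Since `A' = -2A² ≤ 0`, the solution decreases, so it stays above `A(T) = A_T > 0` on `[0, T]`.
There `1/A` has derivative `2`, hence `1/A(0) = 1/A_T - 2T ≤ T - 2T < 0`, contradicting `A(0) > 0`.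
-/

open Set

section Riccati

variable {A : ℝ → ℝ} {c a b : ℝ}

theorem hasDerivAt_inv_of_hasDerivAt_neg_mul_sq {t : ℝ} (h : HasDerivAt A (-c * A t ^ 2) t)
    (ht : A t ≠ 0) : HasDerivAt (fun s => (A s)⁻¹) c t := by
  have hc : -(-c * A t ^ 2) / A t ^ 2 = c := by field_simp
  simpa only [hc] using h.fun_inv ht

theorem antitoneOn_of_hasDerivAt_neg_mul_sq (hc : 0 ≤ c)
    (hA : ∀ t ∈ Icc a b, HasDerivAt A (-c * A t ^ 2) t) : AntitoneOn A (Icc a b) := by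
  refine antitoneOn_of_hasDerivWithinAt_nonpos (convex_Icc a b)
    (fun t ht => (hA t ht).continuousAt.continuousWithinAt)
    (fun t ht => (hA t (interior_subset ht)).hasDerivWithinAt) fun t _ => ?_
  nlinarith [sq_nonneg (A t)]

theorem inv_sub_inv_eq_of_hasDerivAt_neg_mul_sq
    (hA : ∀ t ∈ Icc a b, HasDerivAt A (-c * A t ^ 2) t) (hne : ∀ t ∈ Icc a b, A t ≠ 0)
    (hab : a ≤ b) : (A b)⁻¹ - (A a)⁻¹ = c * (b - a) := by
  have hinv : ∀ t ∈ Icc a b, HasDerivAt (fun s => (A s)⁻¹) c t := fun t ht =>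
    hasDerivAt_inv_of_hasDerivAt_neg_mul_sq (hA t ht) (hne t ht)
  have hline : ∀ t, HasDerivAt (fun s => (A a)⁻¹ + c * (s - a)) c t := fun t => by
    simpa using ((hasDerivAt_id t).sub_const a).const_mul c |>.const_add (A a)⁻¹
  have key := eq_of_has_deriv_right_eq
    (fun t ht => (hinv t (Ico_subset_Icc_self ht)).hasDerivWithinAt)
    (fun t _ => (hline t).hasDerivWithinAt)
    (fun t ht => (hinv t ht).continuousAt.continuousWithinAt)
    (fun t _ => (hline t).continuousAt.continuousWithinAt) (by simp) b ⟨hab, le_rfl⟩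
  linarith

theorem mul_sub_lt_inv_of_hasDerivAt_neg_mul_sq (hc : 0 ≤ c)
    (hA : ∀ t ∈ Icc a b, HasDerivAt A (-c * A t ^ 2) t) (hab : a ≤ b) (hb : 0 < A b) :
    c * (b - a) < (A b)⁻¹ := by
  have hanti := antitoneOn_of_hasDerivAt_neg_mul_sq hc hA
  have hbmem : b ∈ Icc a b := ⟨hab, le_rfl⟩
  have hpos : ∀ t ∈ Icc a b, 0 < A t := fun t ht => hb.trans_le (hanti ht hbmem ht.2)
  have hdiff := inv_sub_inv_eq_of_hasDerivAt_neg_mul_sq hA (fun t ht => (hpos t ht).ne') hab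
  have ha : 0 < (A a)⁻¹ := inv_pos.mpr (hpos a ⟨le_rfl, hab⟩)
  linarith

end Riccati

/-- For `a = 0`, terminal data `A_T > 0` and `T·A_T ≥ 1`, there is no differentiable
function `A : [0,T] → ℝ` solving the Riccati equation `A' = -2A²` on `[0, T]` with
`A(T) = A_T`. -/
theorem riccati_nonexistence_a_zero
    (T A_T : ℝ) (hAT : 0 < A_T) (hT : 1 ≤ T * A_T) :
    ¬ ∃ A : ℝ → ℝ,
        (∀ t ∈ Set.Icc (0 : ℝ) T, HasDerivAt A (-2 * (A t) ^ 2) t) ∧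
        A T = A_T := by
  rintro ⟨A, hA, rfl⟩
  have hTpos : 0 < T := pos_of_mul_pos_left (one_pos.trans_le hT) hAT.le
  have hblowup := mul_sub_lt_inv_of_hasDerivAt_neg_mul_sq zero_le_two hA hTpos.le hAT
  have hinv : (A T)⁻¹ ≤ T := (inv_le_iff_one_le_mul₀ hAT).mpr (by linarith [mul_comm T (A T)])
  linarith
end

section
/- Let a < 0, k₋ = √(-a/2), A_T < k₋, and let A(t) = -k₋ · ((A_T - k₋)·exp(4k₋(T - t)) + (A_T + k₋)) / ((A_T - k₋)·exp(4k₋(T - t)) - (A_T + k₋)) be the solution of the Riccati equation A' = -a - 2A² with A(T) = A_T. Then A(t) converges to the equilibrium value -k₋ as t → -∞; more precisely, A(t) + k₋ = -2k₋(A_T + k₋)·exp(-4k₋(T - t)) / ((A_T - k₋) - (A_T + k₋)·exp(-4k₋(T - t))), which tends to 0 as t → -∞. -/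
open Filter Topology

/-! With `E = exp (4k(T - t)) ≥ 1` for `t ≤ T`, the solution is the Möbius image
`-k (cE + d) / (cE - d)` of `E`, where `c = A_T - k < 0` and `d = A_T + k`. Shifting by `k` and
dividing numerator and denominator by `E` gives `-2kd E⁻¹ / (c - d E⁻¹)`, and `E⁻¹ → 0` as
`t → -∞` while the denominator tends to `c ≠ 0`. -/

theorem mobius_add_eq_div_inv {K : Type*} [Field K] {c d x : K} (k : K) (hx : x ≠ 0)
    (hden : c * x - d ≠ 0) :
    -k * (c * x + d) / (c * x - d) + k = -2 * k * d * x⁻¹ / (c - d * x⁻¹) := by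
  have hden' : c - d * x⁻¹ ≠ 0 := by
    rwa [← mul_ne_zero_iff_right hx, sub_mul, inv_mul_cancel_right₀ hx]
  field_simp
  ring

theorem tendsto_exp_neg_mul_sub_atBot {r : ℝ} (hr : 0 < r) (T : ℝ) :
    Tendsto (fun t => Real.exp (-(r * (T - t)))) atBot (𝓝 0) := by
  have hlin : Tendsto (fun t : ℝ => -(r * (T - t))) atBot atBot :=
    (tendsto_atBot_add_const_right atBot (-(r * T)) (tendsto_id.const_mul_atBot hr)).congr
      fun t => by simp only [id]; ring
  exact Real.tendsto_exp_atBot.comp hlin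

theorem Filter.Tendsto.mul_div_const_sub_mul_zero {α : Type*} {l : Filter α} {ε : α → ℝ}
    (hε : Tendsto ε l (𝓝 0)) (b : ℝ) {c : ℝ} (hc : c ≠ 0) (d : ℝ) :
    Tendsto (fun t => b * ε t / (c - d * ε t)) l (𝓝 0) := by
  have hlim := (hε.const_mul b).div (tendsto_const_nhds (x := c) |>.sub (hε.const_mul d))
    (by simpa using hc)
  simpa only [mul_zero, sub_zero, zero_div, Pi.div_def] using hlim

/-- For `a < 0`, `k₋ = √(-a/2)`, `A_T < k₋`, the explicit solution
`A(t) = -k₋ ((A_T - k₋) e^{4k₋(T-t)} + (A_T + k₋)) / ((A_T - k₋) e^{4k₋(T-t)} - (A_T + k₋))`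
of the Riccati equation `A' = -a - 2A²`, `A(T) = A_T`, converges to the stable
equilibrium `-k₋` as `t → -∞`; more precisely, for `t ≤ T`,
`A(t) + k₋ = -2k₋(A_T + k₋) e^{-4k₋(T-t)} / ((A_T - k₋) - (A_T + k₋) e^{-4k₋(T-t)})`,
which tends to `0` as `t → -∞`. -/
theorem riccati_convergence_to_equilibrium
    (a T A_T k : ℝ) (ha : a < 0) (hk : k = Real.sqrt (-a / 2)) (hAT : A_T < k)
    (A : ℝ → ℝ)
    (hA : ∀ t : ℝ, A t =
      -k * ((A_T - k) * Real.exp (4 * k * (T - t)) + (A_T + k)) /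
        ((A_T - k) * Real.exp (4 * k * (T - t)) - (A_T + k))) :
    (∀ t ≤ T, A t + k =
      -2 * k * (A_T + k) * Real.exp (-(4 * k * (T - t))) /
        ((A_T - k) - (A_T + k) * Real.exp (-(4 * k * (T - t))))) ∧
    Tendsto (fun t => A t + k) atBot (nhds 0) := by
  have hk0 : 0 < k := hk ▸ Real.sqrt_pos.mpr (by linarith)
  have hshift : ∀ t ≤ T, A t + k =
      -2 * k * (A_T + k) * Real.exp (-(4 * k * (T - t))) /
        ((A_T - k) - (A_T + k) * Real.exp (-(4 * k * (T - t)))) := by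
    intro t ht
    have hE : 1 ≤ Real.exp (4 * k * (T - t)) := Real.one_le_exp (by nlinarith)
    have hden : (A_T - k) * Real.exp (4 * k * (T - t)) - (A_T + k) < 0 := by nlinarith
    rw [hA, Real.exp_neg, mobius_add_eq_div_inv k (Real.exp_ne_zero _) hden.ne]
  refine ⟨hshift, ?_⟩
  have hdecay := tendsto_exp_neg_mul_sub_atBot (r := 4 * k) (by positivity) T
  refine (hdecay.mul_div_const_sub_mul_zero (-2 * k * (A_T + k)) (sub_ne_zero.mpr hAT.ne)
    (A_T + k)).congr' ?_
  filter_upwards [eventually_le_atBot T] with t ht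
  exact (hshift t ht).symm
end

section
/- Let δ > 0 and let A, B, K₂, K₁ : I → ℝ be differentiable functions on a real interval I with K₂(t) ≠ 0 for all t ∈ I, satisfying K₂' + 4A·K₂ - 2δ²·K₂² = 0 and K₁' + 2A·K₁ - 2δ²·K₁·K₂ + 2B·K₂ = 0 on I. Define Q(t) = -K₁(t)/(2·K₂(t)). Then Q is differentiable and satisfies Q'(t) = 2·Q(t)·A(t) + B(t) for all t ∈ I. -/
theorem HasDerivAt.neg_div_two_mul {f g : ℝ → ℝ} {f' g' t : ℝ}
    (hf : HasDerivAt f f' t) (hg : HasDerivAt g g' t) (hg₀ : g t ≠ 0) :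
    HasDerivAt (fun s => -f s / (2 * g s)) ((f t * g' - f' * g t) / (2 * g t ^ 2)) t := by
  refine (hf.neg.div (hg.const_mul 2) (mul_ne_zero two_ne_zero hg₀)).congr_deriv ?_
  simp only [Pi.neg_apply]
  field_simp
  ring

/-- The quadratic `δ²` terms of the two Riccati equations cancel in the quotient `-K₁/(2K₂)`,
leaving a linear equation. -/
theorem hasDerivAt_maximum_position {δ a b : ℝ} {K₂ K₁ : ℝ → ℝ} {t : ℝ} (hK₂₀ : K₂ t ≠ 0)
    (hK₂ : HasDerivAt K₂ (2 * δ ^ 2 * K₂ t ^ 2 - 4 * a * K₂ t) t)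
    (hK₁ : HasDerivAt K₁ (2 * δ ^ 2 * K₁ t * K₂ t - 2 * a * K₁ t - 2 * b * K₂ t) t) :
    HasDerivAt (fun s => -K₁ s / (2 * K₂ s)) (2 * (-K₁ t / (2 * K₂ t)) * a + b) t := by
  refine (hK₁.neg_div_two_mul hK₂ hK₂₀).congr_deriv ?_
  field_simp
  ring

theorem maximum_position_ode_general
    (δ : ℝ) (I : Set ℝ)
    (A B K₂ K₁ : ℝ → ℝ)
    (hK₂ne : ∀ t ∈ I, K₂ t ≠ 0)
    (hK₂ : ∀ t ∈ I,
      HasDerivAt K₂ (2 * δ ^ 2 * (K₂ t) ^ 2 - 4 * A t * K₂ t) t)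
    (hK₁ : ∀ t ∈ I,
      HasDerivAt K₁ (2 * δ ^ 2 * K₁ t * K₂ t - 2 * A t * K₁ t - 2 * B t * K₂ t) t) :
    ∀ t ∈ I, HasDerivAt (fun s => -K₁ s / (2 * K₂ s))
      (2 * (-K₁ t / (2 * K₂ t)) * A t + B t) t :=
  fun t ht => hasDerivAt_maximum_position (hK₂ne t ht) (hK₂ t ht) (hK₁ t ht)

/-- If `K₂, K₁` are differentiable on a real interval `I` with `K₂ ≠ 0`, satisfying
`K₂' + 4AK₂ - 2δ²K₂² = 0` and `K₁' + 2AK₁ - 2δ²K₁K₂ + 2BK₂ = 0` on `I`, then the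
position of the maximum `Q = -K₁/(2K₂)` of the Gaussian density is differentiable
and satisfies `Q' = 2QA + B` on `I`. -/
theorem maximum_position_ode
    (δ : ℝ) (hδ : 0 < δ) (I : Set ℝ) (hI : I.OrdConnected)
    (A B K₂ K₁ : ℝ → ℝ)
    (hK₂ne : ∀ t ∈ I, K₂ t ≠ 0)
    (hK₂ : ∀ t ∈ I,
      HasDerivAt K₂ (2 * δ ^ 2 * (K₂ t) ^ 2 - 4 * A t * K₂ t) t)
    (hK₁ : ∀ t ∈ I,
      HasDerivAt K₁ (2 * δ ^ 2 * K₁ t * K₂ t - 2 * A t * K₁ t - 2 * B t * K₂ t) t) :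
    ∀ t ∈ I, HasDerivAt (fun s => -K₁ s / (2 * K₂ s))
      (2 * (-K₁ t / (2 * K₂ t)) * A t + B t) t :=
  maximum_position_ode_general δ I A B K₂ K₁ hK₂ne hK₂ hK₁
end

section
/- Let δ > 0 and let A, B, K₂, K₁, K₀ : I → ℝ be differentiable functions on a real interval I satisfying K₂' + 4AK₂ - 2δ²K₂² = 0, K₁' + 2AK₁ - 2δ²K₁K₂ + 2BK₂ = 0, and K₀' + 2A + BK₁ - (δ²/2)(K₁² + 2K₂) = 0 on I. Define Φ(t, x) = A(t)x² + B(t)x + C(t) (for any differentiable C) and m(t, x) = exp(K₂(t)x² + K₁(t)x + K₀(t)). Then for every t ∈ I and x ∈ ℝ, ∂_t m + ∂_x(m · ∂_x Φ) = (δ²/2)∂²_{xx} m. -/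
/-!
Every term of the equation is `m` times a polynomial of degree at most two in `x`: the time
derivative contributes `K₂' x² + K₁' x + K₀'`, the transport term
`(2K₂x + K₁)(2Ax + B) + 2A` and the diffusion term `(δ²/2)((2K₂x + K₁)² + 2K₂)`. Comparing the
coefficients of `x²`, `x` and `1`, the equation is exactly the three ODEs for `K₂, K₁, K₀`.
-/

open Real

theorem hasDerivAt_quadratic (a b c y : ℝ) :
    HasDerivAt (fun y => a * y ^ 2 + b * y + c) (2 * a * y + b) y :=
  (((hasDerivAt_pow 2 y).const_mul a).fun_add ((hasDerivAt_id' y).const_mul b)).add_const c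
    |>.congr_deriv (by ring)

theorem deriv_quadratic (a b c : ℝ) :
    deriv (fun y => a * y ^ 2 + b * y + c) = fun y => 2 * a * y + b :=
  funext fun y => (hasDerivAt_quadratic a b c y).deriv

theorem deriv_exp_quadratic (a b c : ℝ) :
    deriv (fun y => exp (a * y ^ 2 + b * y + c))
      = fun y => exp (a * y ^ 2 + b * y + c) * (2 * a * y + b) :=
  funext fun y => (hasDerivAt_quadratic a b c y).exp.deriv

theorem deriv_exp_quadratic_mul_affine (a b c p q x : ℝ) :
    deriv (fun y => exp (a * y ^ 2 + b * y + c) * (p * y + q)) x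
      = exp (a * x ^ 2 + b * x + c) * ((2 * a * x + b) * (p * x + q) + p) := by
  have hp : HasDerivAt (fun y => p * y + q) p x := by
    simpa using ((hasDerivAt_id x).const_mul p).add_const q
  rw [((hasDerivAt_quadratic a b c x).exp.fun_mul hp).deriv]
  ring

theorem hasDerivAt_exp_quadratic_of_coeffs {K₂ K₁ K₀ : ℝ → ℝ} {k₂ k₁ k₀ t : ℝ} (x : ℝ)
    (h₂ : HasDerivAt K₂ k₂ t) (h₁ : HasDerivAt K₁ k₁ t) (h₀ : HasDerivAt K₀ k₀ t) :
    HasDerivAt (fun s => exp (K₂ s * x ^ 2 + K₁ s * x + K₀ s))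
      (exp (K₂ t * x ^ 2 + K₁ t * x + K₀ t) * (k₂ * x ^ 2 + k₁ * x + k₀)) t :=
  (((h₂.mul_const (x ^ 2)).add (h₁.mul_const x)).add h₀).exp

theorem gaussian_ansatz_solves_KFP_general
    (δ : ℝ) (I : Set ℝ)
    (A B C K₂ K₁ K₀ : ℝ → ℝ)
    (hK₂ : ∀ t ∈ I,
      HasDerivAt K₂ (2 * δ ^ 2 * (K₂ t) ^ 2 - 4 * A t * K₂ t) t)
    (hK₁ : ∀ t ∈ I,
      HasDerivAt K₁ (2 * δ ^ 2 * K₁ t * K₂ t - 2 * A t * K₁ t - 2 * B t * K₂ t) t)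
    (hK₀ : ∀ t ∈ I,
      HasDerivAt K₀ ((δ ^ 2 / 2) * ((K₁ t) ^ 2 + 2 * K₂ t) - 2 * A t - B t * K₁ t) t) :
    ∀ t ∈ I, ∀ x : ℝ,
      deriv (fun s => Real.exp (K₂ s * x ^ 2 + K₁ s * x + K₀ s)) t
        + deriv (fun y => Real.exp (K₂ t * y ^ 2 + K₁ t * y + K₀ t)
            * deriv (fun z => A t * z ^ 2 + B t * z + C t) y) x
      = (δ ^ 2 / 2) *
          deriv (deriv (fun y => Real.exp (K₂ t * y ^ 2 + K₁ t * y + K₀ t))) x := by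
  intro t ht x
  rw [(hasDerivAt_exp_quadratic_of_coeffs x (hK₂ t ht) (hK₁ t ht) (hK₀ t ht)).deriv,
    deriv_quadratic, deriv_exp_quadratic_mul_affine, deriv_exp_quadratic,
    deriv_exp_quadratic_mul_affine]
  ring

/-- If `K₂, K₁, K₀` are differentiable on a real interval `I` and satisfy
`K₂' + 4AK₂ - 2δ²K₂² = 0`, `K₁' + 2AK₁ - 2δ²K₁K₂ + 2BK₂ = 0`,
`K₀' + 2A + BK₁ - (δ²/2)(K₁² + 2K₂) = 0` on `I`, then with
`Φ(t,x) = A(t)x² + B(t)x + C(t)` (for any differentiable `C`) and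
`m(t,x) = exp(K₂(t)x² + K₁(t)x + K₀(t))`, the Kolmogorov–Fokker–Planck equation
`∂ₜm + ∂ₓ(m ∂ₓΦ) = (δ²/2)∂²ₓₓm` holds for all `t ∈ I`, `x ∈ ℝ`. -/
theorem gaussian_ansatz_solves_KFP
    (δ : ℝ) (hδ : 0 < δ) (I : Set ℝ) (hI : I.OrdConnected)
    (A B C K₂ K₁ K₀ : ℝ → ℝ)
    (hAdiff : ∀ t ∈ I, DifferentiableAt ℝ A t)
    (hBdiff : ∀ t ∈ I, DifferentiableAt ℝ B t)
    (hCdiff : ∀ t ∈ I, DifferentiableAt ℝ C t)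
    (hK₂ : ∀ t ∈ I,
      HasDerivAt K₂ (2 * δ ^ 2 * (K₂ t) ^ 2 - 4 * A t * K₂ t) t)
    (hK₁ : ∀ t ∈ I,
      HasDerivAt K₁ (2 * δ ^ 2 * K₁ t * K₂ t - 2 * A t * K₁ t - 2 * B t * K₂ t) t)
    (hK₀ : ∀ t ∈ I,
      HasDerivAt K₀ ((δ ^ 2 / 2) * ((K₁ t) ^ 2 + 2 * K₂ t) - 2 * A t - B t * K₁ t) t) :
    ∀ t ∈ I, ∀ x : ℝ,
      deriv (fun s => Real.exp (K₂ s * x ^ 2 + K₁ s * x + K₀ s)) t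
        + deriv (fun y => Real.exp (K₂ t * y ^ 2 + K₁ t * y + K₀ t)
            * deriv (fun z => A t * z ^ 2 + B t * z + C t) y) x
      = (δ ^ 2 / 2) *
          deriv (deriv (fun y => Real.exp (K₂ t * y ^ 2 + K₁ t * y + K₀ t))) x :=
  gaussian_ansatz_solves_KFP_general δ I A B C K₂ K₁ K₀ hK₂ hK₁ hK₀
end

section
/- Let δ > 0, a ∈ ℝ, and let A, Q : I → ℝ be differentiable functions on a real interval I with Q(t) ≠ 0, satisfying A' + 2A² = -a and Q' = 2AQ + δ²/(2Q) on I. Then the function t ↦ (a + 2A(t)²)·Q(t)² + δ²·A(t) has derivative zero on I, i.e., (a + 2A²)Q² + δ²A is a first integral of the system. -/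
/-! Differentiating `E = (a + 2A²)Q² + δ²A` gives `4AA'Q² + 2(a + 2A²)QQ' + δ²A'`. Substituting
`Q' = 2AQ + δ²/(2Q)`, the term `2AQ` contributes `4A(a + 2A²)Q²`, which cancels `4AA'Q²` because
`A' = -(a + 2A²)`, while `δ²/(2Q)` contributes `(a + 2A²)δ²`, which cancels `δ²A'`. -/

lemma hasDerivAt_first_integral {A Q : ℝ → ℝ} {A' Q' a c t : ℝ}
    (hA : HasDerivAt A A' t) (hQ : HasDerivAt Q Q' t) :
    HasDerivAt (fun s => (a + 2 * A s ^ 2) * Q s ^ 2 + c * A s)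
      ((2 * (2 * A t * A')) * Q t ^ 2 + (a + 2 * A t ^ 2) * (2 * Q t * Q') + c * A') t := by
  have hA2 := (hA.pow 2).const_mul 2 |>.const_add a
  have hQ2 := hQ.pow 2
  simp only [Nat.cast_ofNat, Nat.add_one_sub_one, pow_one] at hA2 hQ2
  exact (hA2.mul hQ2).add (hA.const_mul c)

theorem semiaxis_first_integral_general
    (δ a : ℝ) (I : Set ℝ)
    (A Q : ℝ → ℝ)
    (hQne : ∀ t ∈ I, Q t ≠ 0)
    (hA : ∀ t ∈ I, HasDerivAt A (-a - 2 * (A t) ^ 2) t)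
    (hQ : ∀ t ∈ I, HasDerivAt Q (2 * A t * Q t + δ ^ 2 / (2 * Q t)) t) :
    ∀ t ∈ I,
      HasDerivAt (fun s => (a + 2 * (A s) ^ 2) * (Q s) ^ 2 + δ ^ 2 * A s) 0 t := by
  intro t ht
  convert hasDerivAt_first_integral (c := δ ^ 2) (hA t ht) (hQ t ht) using 1
  field_simp [hQne t ht]
  ring

/-- If `A, Q` are differentiable on a real interval `I` with `Q ≠ 0`, satisfying the
Riccati equation `A' + 2A² = -a` and the Bernoulli equation `Q' = 2AQ + δ²/(2Q)` on `I`,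
then `(a + 2A²)Q² + δ²A` has zero derivative on `I`, i.e. it is a first integral of
the system. -/
theorem semiaxis_first_integral
    (δ a : ℝ) (hδ : 0 < δ) (I : Set ℝ) (hI : I.OrdConnected)
    (A Q : ℝ → ℝ)
    (hQne : ∀ t ∈ I, Q t ≠ 0)
    (hA : ∀ t ∈ I, HasDerivAt A (-a - 2 * (A t) ^ 2) t)
    (hQ : ∀ t ∈ I, HasDerivAt Q (2 * A t * Q t + δ ^ 2 / (2 * Q t)) t) :
    ∀ t ∈ I,
      HasDerivAt (fun s => (a + 2 * (A s) ^ 2) * (Q s) ^ 2 + δ ^ 2 * A s) 0 t :=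
  semiaxis_first_integral_general δ a I A Q hQne hA hQ
end

section
/- Let δ > 0, a ∈ ℝ, and let A, Q : [0, T] → ℝ be differentiable with Q(t) > 0, satisfying A' + 2A² = -a and Q' = 2AQ + δ²/(2Q) on [0, T]. Then for every t ∈ [0, T] with a + 2A(t)² ≠ 0, Q(t)² = ((a + 2A(0)²)·Q(0)² - δ²·(A(t) - A(0))) / (a + 2A(t)²), i.e., Q(t) = (((a + 2A(0)²)Q(0)² - δ²(A(t) - A(0)))/(a + 2A(t)²))^{1/2}. -/
/-!
Along any solution, `I = (a + 2A²)Q² + δ²A` is a first integral: with `A' = -(a + 2A²)` and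
`2QQ' = 4AQ² + δ²`, its derivative is `-(a + 2A²)·4AQ² + (a + 2A²)(4AQ² + δ²) - δ²(a + 2A²) = 0`.
So `I(t) = I(0)` on `[0, T]`, which is solved for `Q(t)²` when `a + 2A(t)² ≠ 0`; since `Q > 0`,
`Q(t)` is the square root.
-/

open Set

def riccatiBernoulliIntegral (a δ : ℝ) (A Q : ℝ → ℝ) (t : ℝ) : ℝ :=
  (a + 2 * A t ^ 2) * Q t ^ 2 + δ ^ 2 * A t

theorem hasDerivAt_riccatiBernoulliIntegral {a δ t : ℝ} {A Q : ℝ → ℝ} (hQt : Q t ≠ 0)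
    (hA : HasDerivAt A (-a - 2 * A t ^ 2) t)
    (hQ : HasDerivAt Q (2 * A t * Q t + δ ^ 2 / (2 * Q t)) t) :
    HasDerivAt (riccatiBernoulliIntegral a δ A Q) 0 t := by
  have h := ((((hA.fun_pow 2).const_mul 2).const_add a).fun_mul (hQ.fun_pow 2)).fun_add
    (hA.const_mul (δ ^ 2))
  refine h.congr_deriv ?_
  field_simp
  ring

theorem riccatiBernoulliIntegral_eq_of_mem_Icc {a δ T : ℝ} {A Q : ℝ → ℝ}
    (hQ0 : ∀ t ∈ Icc 0 T, Q t ≠ 0)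
    (hA : ∀ t ∈ Icc 0 T, HasDerivAt A (-a - 2 * A t ^ 2) t)
    (hQ : ∀ t ∈ Icc 0 T, HasDerivAt Q (2 * A t * Q t + δ ^ 2 / (2 * Q t)) t) :
    ∀ t ∈ Icc 0 T, riccatiBernoulliIntegral a δ A Q t = riccatiBernoulliIntegral a δ A Q 0 := by
  have hderiv : ∀ t ∈ Icc 0 T, HasDerivAt (riccatiBernoulliIntegral a δ A Q) 0 t :=
    fun t ht => hasDerivAt_riccatiBernoulliIntegral (hQ0 t ht) (hA t ht) (hQ t ht)
  exact constant_of_has_deriv_right_zero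
    (fun t ht => (hderiv t ht).continuousAt.continuousWithinAt)
    (fun t ht => (hderiv t (Ico_subset_Icc_self ht)).hasDerivWithinAt)

theorem semiaxis_maximum_formula_general
    (δ a T : ℝ)
    (A Q : ℝ → ℝ)
    (hQpos : ∀ t ∈ Set.Icc (0 : ℝ) T, 0 < Q t)
    (hA : ∀ t ∈ Set.Icc (0 : ℝ) T, HasDerivAt A (-a - 2 * (A t) ^ 2) t)
    (hQ : ∀ t ∈ Set.Icc (0 : ℝ) T,
      HasDerivAt Q (2 * A t * Q t + δ ^ 2 / (2 * Q t)) t) :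
    ∀ t ∈ Set.Icc (0 : ℝ) T, a + 2 * (A t) ^ 2 ≠ 0 →
      (Q t) ^ 2 = ((a + 2 * (A 0) ^ 2) * (Q 0) ^ 2 - δ ^ 2 * (A t - A 0)) /
          (a + 2 * (A t) ^ 2) ∧
      Q t = Real.sqrt (((a + 2 * (A 0) ^ 2) * (Q 0) ^ 2 - δ ^ 2 * (A t - A 0)) /
          (a + 2 * (A t) ^ 2)) := by
  intro t ht hne
  have hI := riccatiBernoulliIntegral_eq_of_mem_Icc (fun s hs => (hQpos s hs).ne') hA hQ t ht
  unfold riccatiBernoulliIntegral at hI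
  have hsq : Q t ^ 2 = ((a + 2 * A 0 ^ 2) * Q 0 ^ 2 - δ ^ 2 * (A t - A 0)) /
      (a + 2 * A t ^ 2) := by
    rw [eq_div_iff hne]
    linarith
  exact ⟨hsq, by rw [← hsq, Real.sqrt_sq (hQpos t ht).le]⟩

/-- If `A, Q` are differentiable on `[0, T]` with `Q > 0`, satisfying the Riccati
equation `A' + 2A² = -a` and the Bernoulli equation `Q' = 2AQ + δ²/(2Q)` on `[0, T]`,
then for every `t ∈ [0, T]` with `a + 2A(t)² ≠ 0`,
`Q(t)² = ((a + 2A(0)²)Q(0)² - δ²(A(t) - A(0))) / (a + 2A(t)²)`, i.e.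
`Q(t) = (((a + 2A(0)²)Q(0)² - δ²(A(t) - A(0)))/(a + 2A(t)²))^{1/2}`. -/
theorem semiaxis_maximum_formula
    (δ a T : ℝ) (hδ : 0 < δ)
    (A Q : ℝ → ℝ)
    (hQpos : ∀ t ∈ Set.Icc (0 : ℝ) T, 0 < Q t)
    (hA : ∀ t ∈ Set.Icc (0 : ℝ) T, HasDerivAt A (-a - 2 * (A t) ^ 2) t)
    (hQ : ∀ t ∈ Set.Icc (0 : ℝ) T,
      HasDerivAt Q (2 * A t * Q t + δ ^ 2 / (2 * Q t)) t) :
    ∀ t ∈ Set.Icc (0 : ℝ) T, a + 2 * (A t) ^ 2 ≠ 0 →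
      (Q t) ^ 2 = ((a + 2 * (A 0) ^ 2) * (Q 0) ^ 2 - δ ^ 2 * (A t - A 0)) /
          (a + 2 * (A t) ^ 2) ∧
      Q t = Real.sqrt (((a + 2 * (A 0) ^ 2) * (Q 0) ^ 2 - δ ^ 2 * (A t - A 0)) /
          (a + 2 * (A t) ^ 2)) :=
  semiaxis_maximum_formula_general δ a T A Q hQpos hA hQ
end

section
/- Let μ, r ∈ ℝ, σ > 0, T > 0, and q < 1 with q ≠ 0. Set ρ = q·(r + (μ - r)²/(2σ²(1 - q))) and define Φ(t, v) = exp(ρ(T - t))·v^q/q for t ∈ ℝ and v > 0. Then ∂_v Φ > 0 and ∂²_{vv} Φ < 0 for all v > 0, Φ(T, v) = v^q/q, and Φ satisfies the Merton Hamilton–Jacobi–Bellman equation ∂_t Φ + r·v·∂_v Φ - (μ - r)²·(∂_v Φ)²/(2σ²·∂²_{vv} Φ) = 0 for all t and all v > 0; moreover, the corresponding optimal control h* = -(μ - r)·∂_v Φ/(v·σ²·∂²_{vv} Φ) is the constant (μ - r)/(σ²(1 - q)). -/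
lemma my_d1 (c q : ℝ) (v : ℝ) (hv : v ≠ 0) :
    HasDerivAt (fun x : ℝ => c * x ^ q / q) (c * (q * v ^ (q - 1)) / q) v := by
  exact (((Real.hasDerivAt_rpow_const (Or.inl hv)).const_mul c).div_const q)


/-- For the Merton problem with HARA utility `N(v) = v^q/q` (`q < 1`, `q ≠ 0`), setting
`ρ = q(r + (μ-r)²/(2σ²(1-q)))`, the function `Φ(t,v) = e^{ρ(T-t)} v^q/q` satisfies
`∂_vΦ > 0` and `∂²_{vv}Φ < 0` for `v > 0`, the terminal condition `Φ(T,v) = v^q/q`,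
the Merton Hamilton–Jacobi–Bellman equation
`∂ₜΦ + rv∂_vΦ - (μ-r)²(∂_vΦ)²/(2σ²∂²_{vv}Φ) = 0`, and the corresponding optimal
control `h* = -(μ-r)∂_vΦ/(vσ²∂²_{vv}Φ)` is the constant `(μ-r)/(σ²(1-q))`. -/
theorem merton_value_function
    (μ r σ T q ρ : ℝ) (hσ : 0 < σ) (hT : 0 < T) (hq1 : q < 1) (hq0 : q ≠ 0)
    (hρ : ρ = q * (r + (μ - r) ^ 2 / (2 * σ ^ 2 * (1 - q))))
    (Φ : ℝ → ℝ → ℝ)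
    (hΦ : ∀ t v : ℝ, Φ t v = Real.exp (ρ * (T - t)) * v ^ q / q) :
    ∀ t : ℝ, ∀ v : ℝ, 0 < v →
      0 < deriv (Φ t) v ∧
      deriv (deriv (Φ t)) v < 0 ∧
      Φ T v = v ^ q / q ∧
      deriv (fun s => Φ s v) t + r * v * deriv (Φ t) v
        - (μ - r) ^ 2 * (deriv (Φ t) v) ^ 2 / (2 * σ ^ 2 * deriv (deriv (Φ t)) v)
        = 0 ∧
      -((μ - r) * deriv (Φ t) v) / (v * σ ^ 2 * deriv (deriv (Φ t)) v)
        = (μ - r) / (σ ^ 2 * (1 - q)) := by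
  intro t v hv
  have hv0 : v ≠ 0 := ne_of_gt hv
  set c : ℝ := Real.exp (ρ * (T - t)) with hc
  have hcpos : 0 < c := Real.exp_pos _
  have hΦt : Φ t = fun x : ℝ => c * x ^ q / q := funext (hΦ t)
  -- first derivative on a neighborhood
  have hd1 : ∀ x : ℝ, x ≠ 0 → deriv (Φ t) x = c * x ^ (q - 1) := by
    intro x hx
    rw [hΦt, (my_d1 c q x hx).deriv]
    field_simp
  have hD1 : deriv (Φ t) v = c * v ^ (q - 1) := hd1 v hv0
  -- second derivative
  have hev : deriv (Φ t) =ᶠ[nhds v] fun x => c * x ^ (q - 1) := by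
    filter_upwards [eventually_ne_nhds hv0] with x hx using hd1 x hx
  have hD2 : deriv (deriv (Φ t)) v = c * ((q - 1) * v ^ (q - 1 - 1)) := by
    rw [Filter.EventuallyEq.deriv_eq hev]
    exact ((Real.hasDerivAt_rpow_const (Or.inl hv0)).const_mul c).deriv
  -- time derivative
  have hDt : deriv (fun s => Φ s v) t = Real.exp (ρ * (T - t)) * (ρ * -1) * v ^ q / q := by
    have h1 : HasDerivAt (fun s : ℝ => ρ * (T - s)) (ρ * -1) t := by
      simpa using (((hasDerivAt_id t).const_sub T).const_mul ρ)
    have h2 : HasDerivAt (fun s : ℝ => Real.exp (ρ * (T - s)) * v ^ q / q)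
        (Real.exp (ρ * (T - t)) * (ρ * -1) * v ^ q / q) t := (h1.exp.mul_const _).div_const q
    have : (fun s => Φ s v) = fun s : ℝ => Real.exp (ρ * (T - s)) * v ^ q / q := by
      funext s; exact hΦ s v
    rw [this, h2.deriv]
  have hvq : 0 < v ^ (q - 1) := Real.rpow_pos_of_pos hv _
  have hvq2 : 0 < v ^ (q - 1 - 1) := Real.rpow_pos_of_pos hv _
  have h1q : (0:ℝ) < 1 - q := by linarith
  refine ⟨by rw [hD1]; positivity, ?_, ?_, ?_, ?_⟩
  · rw [hD2]; nlinarith [mul_pos hcpos hvq2]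
  · rw [hΦ]; simp
  · rw [hDt, hD1, hD2, ← hc, hρ]
    have hσ0 : (σ:ℝ) ≠ 0 := ne_of_gt hσ
    have hc0 : c ≠ 0 := ne_of_gt hcpos
    have hvq0 : v ^ (q-1) ≠ 0 := ne_of_gt hvq
    have hvq20 : v ^ (q-1-1) ≠ 0 := ne_of_gt hvq2
    have e1 : v ^ q = v ^ (q-1) * v := by
      rw [← Real.rpow_add_one hv0]; ring_nf
    have e2 : v ^ (q-1) = v ^ (q-1-1) * v := by
      rw [← Real.rpow_add_one hv0]; ring_nf
    have hq1' : q - 1 ≠ 0 := sub_ne_zero.mpr (by intro h; exact absurd h (ne_of_lt hq1))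
    have hD : 2 * σ ^ 2 * (c * ((q - 1) * v ^ (q - 1 - 1))) ≠ 0 := by positivity
    rw [sub_eq_zero, eq_div_iff hD, e1, e2]
    field_simp
    ring
  · rw [hD1, hD2]
    have e2 : v ^ (q-1) = v ^ (q-1-1) * v := by
      rw [← Real.rpow_add_one hv0]; ring_nf
    rw [e2]
    have hσ0 : (σ:ℝ) ≠ 0 := ne_of_gt hσ
    have hc0 : c ≠ 0 := ne_of_gt hcpos
    have hvq20 : v ^ (q-1-1) ≠ 0 := ne_of_gt (Real.rpow_pos_of_pos hv _)
    have hq1' : q - 1 ≠ 0 := by intro h; apply absurd (by linarith : q = 1) (ne_of_lt hq1)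
    field_simp
    ring
end
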